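/- Non-decomposition (FEL): there is no *-term P such that fe(P) can be decomposed as X[□↦Y] with X ∈ 𝒯_□ and Y ∈ 𝒯, where X ≠ □, X contains □, and X contains neither T nor F. -/
import Mathlib


/-! Shared definitions for left-sequential logics (FEL and SCL),
    evaluation trees, and decompositions. -/

/-- FEL-terms over atoms `A` (`and` = full left-sequential conjunction `∧•`,
    `or` = full left-sequential disjunction `∨•`). -/
inductive FTerm (A : Type) : Type
  | atom : A → FTerm A
  | tru  : FTerm A
  | fls  : FTerm A
  | neg  : FTerm A → FTerm A
  | and  : FTerm A → FTerm A → FTerm A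
  | or   : FTerm A → FTerm A → FTerm A

/-- SCL-terms over atoms `A` (`and` = short-circuit conjunction `∧◦`,
    `or` = short-circuit disjunction `∨◦`). -/
inductive STerm (A : Type) : Type
  | atom : A → STerm A
  | tru  : STerm A
  | fls  : STerm A
  | neg  : STerm A → STerm A
  | and  : STerm A → STerm A → STerm A
  | or   : STerm A → STerm A → STerm A

/-- Evaluation trees: finite binary trees over `A` with leaves `T`, `F`. -/
inductive ETree (A : Type) : Type
  | tru  : ETree A
  | fls  : ETree A
  | node : ETree A → A → ETree A → ETree A

namespace ETree

/-- `X.subst Y Z = X[T↦Y, F↦Z]`. -/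
def subst {A : Type} : ETree A → ETree A → ETree A → ETree A
  | .tru, y, _ => y
  | .fls, _, z => z
  | .node l a r, y, z => .node (subst l y z) a (subst r y z)

def hasTru {A : Type} : ETree A → Prop
  | .tru => True
  | .fls => False
  | .node l _ r => hasTru l ∨ hasTru r

def hasFls {A : Type} : ETree A → Prop
  | .tru => False
  | .fls => True
  | .node l _ r => hasFls l ∨ hasFls r

def depth {A : Type} : ETree A → ℕ
  | .tru => 0
  | .fls => 0
  | .node l _ r => 1 + max (depth l) (depth r)

end ETree

/-- The full evaluation function `fe : FTerm → 𝒯`. -/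
def fe {A : Type} : FTerm A → ETree A
  | FTerm.tru => ETree.tru
  | FTerm.fls => ETree.fls
  | FTerm.atom a => ETree.node ETree.tru a ETree.fls
  | FTerm.neg p => (fe p).subst ETree.fls ETree.tru
  | FTerm.and p q => (fe p).subst (fe q) ((fe q).subst ETree.fls ETree.fls)
  | FTerm.or p q => (fe p).subst ((fe q).subst ETree.tru ETree.tru) (fe q)

/-- The short-circuit evaluation function `se : STerm → 𝒯`. -/
def se {A : Type} : STerm A → ETree A
  | STerm.tru => ETree.tru
  | STerm.fls => ETree.fls
  | STerm.atom a => ETree.node ETree.tru a ETree.fls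
  | STerm.neg p => (se p).subst ETree.fls ETree.tru
  | STerm.and p q => (se p).subst (se q) ETree.fls
  | STerm.or p q => (se p).subst ETree.tru (se q)

/-- Derivability from EqFFEL by equational logic. -/
inductive EqFFEL {A : Type} : FTerm A → FTerm A → Prop
  | refl (p : FTerm A) : EqFFEL p p
  | symm {p q : FTerm A} : EqFFEL p q → EqFFEL q p
  | trans {p q r : FTerm A} : EqFFEL p q → EqFFEL q r → EqFFEL p r
  | neg_congr {p q : FTerm A} : EqFFEL p q → EqFFEL (FTerm.neg p) (FTerm.neg q)
  | and_congr {p p' q q' : FTerm A} :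
      EqFFEL p p' → EqFFEL q q' → EqFFEL (FTerm.and p q) (FTerm.and p' q')
  | or_congr {p p' q q' : FTerm A} :
      EqFFEL p p' → EqFFEL q q' → EqFFEL (FTerm.or p q) (FTerm.or p' q')
  | fel1 : EqFFEL FTerm.fls (FTerm.neg FTerm.tru)
  | fel2 (x y : FTerm A) : EqFFEL (FTerm.or x y) (FTerm.neg (FTerm.and (FTerm.neg x) (FTerm.neg y)))
  | fel3 (x : FTerm A) : EqFFEL (FTerm.neg (FTerm.neg x)) x
  | fel4 (x y z : FTerm A) : EqFFEL (FTerm.and (FTerm.and x y) z) (FTerm.and x (FTerm.and y z))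
  | fel5 (x : FTerm A) : EqFFEL (FTerm.and FTerm.tru x) x
  | fel6 (x : FTerm A) : EqFFEL (FTerm.and x FTerm.tru) x
  | fel7 (x : FTerm A) : EqFFEL (FTerm.and x FTerm.fls) (FTerm.and FTerm.fls x)
  | fel8 (x : FTerm A) : EqFFEL (FTerm.and x FTerm.fls) (FTerm.and (FTerm.neg x) FTerm.fls)
  | fel9 (x y : FTerm A) :
      EqFFEL (FTerm.or (FTerm.and x FTerm.fls) y) (FTerm.and (FTerm.or x FTerm.tru) y)
  | fel10 (x y : FTerm A) :
      EqFFEL (FTerm.or x (FTerm.and y FTerm.fls)) (FTerm.and x (FTerm.or y FTerm.tru))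

/-- Derivability from EqFSCL by equational logic. -/
inductive EqFSCL {A : Type} : STerm A → STerm A → Prop
  | refl (p : STerm A) : EqFSCL p p
  | symm {p q : STerm A} : EqFSCL p q → EqFSCL q p
  | trans {p q r : STerm A} : EqFSCL p q → EqFSCL q r → EqFSCL p r
  | neg_congr {p q : STerm A} : EqFSCL p q → EqFSCL (STerm.neg p) (STerm.neg q)
  | and_congr {p p' q q' : STerm A} :
      EqFSCL p p' → EqFSCL q q' → EqFSCL (STerm.and p q) (STerm.and p' q')
  | or_congr {p p' q q' : STerm A} :
      EqFSCL p p' → EqFSCL q q' → EqFSCL (STerm.or p q) (STerm.or p' q')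
  | scl1 : EqFSCL STerm.fls (STerm.neg STerm.tru)
  | scl2 (x y : STerm A) : EqFSCL (STerm.or x y) (STerm.neg (STerm.and (STerm.neg x) (STerm.neg y)))
  | scl3 (x : STerm A) : EqFSCL (STerm.neg (STerm.neg x)) x
  | scl4 (x y z : STerm A) : EqFSCL (STerm.and (STerm.and x y) z) (STerm.and x (STerm.and y z))
  | scl5 (x : STerm A) : EqFSCL (STerm.and STerm.tru x) x
  | scl6 (x : STerm A) : EqFSCL (STerm.and x STerm.tru) x
  | scl7 (x : STerm A) : EqFSCL (STerm.and STerm.fls x) STerm.fls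
  | scl8 (x : STerm A) : EqFSCL (STerm.and x STerm.fls) (STerm.and (STerm.neg x) STerm.fls)
  | scl9 (x y : STerm A) :
      EqFSCL (STerm.or (STerm.and x STerm.fls) y) (STerm.and (STerm.or x STerm.tru) y)
  | scl10 (x y z : STerm A) :
      EqFSCL (STerm.or (STerm.and x y) (STerm.and z STerm.fls))
             (STerm.and (STerm.or x (STerm.and z STerm.fls)) (STerm.or y (STerm.and z STerm.fls)))

/-! ### FEL Normal Form grammar -/

/-- T-terms: `P^T ::= T | a ∨• P^T`. -/
inductive IsFT_T {A : Type} : FTerm A → Prop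
  | tru : IsFT_T FTerm.tru
  | or (a : A) {p : FTerm A} : IsFT_T p → IsFT_T (FTerm.or (FTerm.atom a) p)

/-- F-terms: `P^F ::= F | a ∧• P^F`. -/
inductive IsFT_F {A : Type} : FTerm A → Prop
  | fls : IsFT_F FTerm.fls
  | and (a : A) {p : FTerm A} : IsFT_F p → IsFT_F (FTerm.and (FTerm.atom a) p)

/-- ℓ-terms: `P^ℓ ::= a ∧• P^T | ¬a ∧• P^T`. -/
inductive IsFT_L {A : Type} : FTerm A → Prop
  | pos (a : A) {p : FTerm A} : IsFT_T p → IsFT_L (FTerm.and (FTerm.atom a) p)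
  | neg (a : A) {p : FTerm A} : IsFT_T p → IsFT_L (FTerm.and (FTerm.neg (FTerm.atom a)) p)

mutual
/-- `P^c ::= P^ℓ | P^* ∧• P^d`. -/
inductive IsFT_C {A : Type} : FTerm A → Prop
  | ell {p : FTerm A} : IsFT_L p → IsFT_C p
  | and {p q : FTerm A} : IsFT_Star p → IsFT_D q → IsFT_C (FTerm.and p q)
/-- `P^d ::= P^ℓ | P^* ∨• P^c`. -/
inductive IsFT_D {A : Type} : FTerm A → Prop
  | ell {p : FTerm A} : IsFT_L p → IsFT_D p
  | or {p q : FTerm A} : IsFT_Star p → IsFT_C q → IsFT_D (FTerm.or p q)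
/-- `P^* ::= P^c | P^d`. -/
inductive IsFT_Star {A : Type} : FTerm A → Prop
  | c {p : FTerm A} : IsFT_C p → IsFT_Star p
  | d {p : FTerm A} : IsFT_D p → IsFT_Star p
end

/-- FEL Normal Form: `P ::= P^T | P^F | P^T ∧• P^*`. -/
inductive IsFNF {A : Type} : FTerm A → Prop
  | t {p : FTerm A} : IsFT_T p → IsFNF p
  | f {p : FTerm A} : IsFT_F p → IsFNF p
  | ts {p q : FTerm A} : IsFT_T p → IsFT_Star q → IsFNF (FTerm.and p q)

/-! ### SCL Normal Form grammar -/

/-- T-terms: `P^T ::= T | (a ∧◦ P^T) ∨◦ P^T`. -/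
inductive IsST_T {A : Type} : STerm A → Prop
  | tru : IsST_T STerm.tru
  | or (a : A) {p q : STerm A} :
      IsST_T p → IsST_T q → IsST_T (STerm.or (STerm.and (STerm.atom a) p) q)

/-- F-terms: `P^F ::= F | (a ∨◦ P^F) ∧◦ P^F`. -/
inductive IsST_F {A : Type} : STerm A → Prop
  | fls : IsST_F STerm.fls
  | and (a : A) {p q : STerm A} :
      IsST_F p → IsST_F q → IsST_F (STerm.and (STerm.or (STerm.atom a) p) q)

/-- ℓ-terms: `P^ℓ ::= (a ∧◦ P^T) ∨◦ P^F | (¬a ∧◦ P^T) ∨◦ P^F`. -/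
inductive IsST_L {A : Type} : STerm A → Prop
  | pos (a : A) {p q : STerm A} :
      IsST_T p → IsST_F q → IsST_L (STerm.or (STerm.and (STerm.atom a) p) q)
  | neg (a : A) {p q : STerm A} :
      IsST_T p → IsST_F q → IsST_L (STerm.or (STerm.and (STerm.neg (STerm.atom a)) p) q)

mutual
/-- `P^c ::= P^ℓ | P^* ∧◦ P^d`. -/
inductive IsST_C {A : Type} : STerm A → Prop
  | ell {p : STerm A} : IsST_L p → IsST_C p
  | and {p q : STerm A} : IsST_Star p → IsST_D q → IsST_C (STerm.and p q)
/-- `P^d ::= P^ℓ | P^* ∨◦ P^c`. -/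
inductive IsST_D {A : Type} : STerm A → Prop
  | ell {p : STerm A} : IsST_L p → IsST_D p
  | or {p q : STerm A} : IsST_Star p → IsST_C q → IsST_D (STerm.or p q)
/-- `P^* ::= P^c | P^d`. -/
inductive IsST_Star {A : Type} : STerm A → Prop
  | c {p : STerm A} : IsST_C p → IsST_Star p
  | d {p : STerm A} : IsST_D p → IsST_Star p
end

/-- SCL Normal Form: `P ::= P^T | P^F | P^T ∧◦ P^*`. -/
inductive IsSNF {A : Type} : STerm A → Prop
  | t {p : STerm A} : IsST_T p → IsSNF p
  | f {p : STerm A} : IsST_F p → IsSNF p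
  | ts {p q : STerm A} : IsST_T p → IsST_Star q → IsSNF (STerm.and p q)

/-! ### Trees with box leaves -/

/-- `𝒯_□`: trees over `A` with leaves in `{T, F, □}`. -/
inductive ETreeB (A : Type) : Type
  | tru  : ETreeB A
  | fls  : ETreeB A
  | box  : ETreeB A
  | node : ETreeB A → A → ETreeB A → ETreeB A

namespace ETreeB

/-- `X.substBox Y = X[□↦Y]`. -/
def substBox {A : Type} : ETreeB A → ETree A → ETree A
  | .tru, _ => ETree.tru
  | .fls, _ => ETree.fls
  | .box, y => y
  | .node l a r, y => ETree.node (substBox l y) a (substBox r y)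

def hasBox {A : Type} : ETreeB A → Prop
  | .tru => False
  | .fls => False
  | .box => True
  | .node l _ r => hasBox l ∨ hasBox r

def hasTru {A : Type} : ETreeB A → Prop
  | .tru => True
  | .fls => False
  | .box => False
  | .node l _ r => hasTru l ∨ hasTru r

def hasFls {A : Type} : ETreeB A → Prop
  | .tru => False
  | .fls => True
  | .box => False
  | .node l _ r => hasFls l ∨ hasFls r

end ETreeB

/-- `𝒯_{1,2}`: trees over `A` with leaves in `{T, F, □₁, □₂}`. -/
inductive ETree2 (A : Type) : Type
  | tru  : ETree2 A
  | fls  : ETree2 A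
  | box1 : ETree2 A
  | box2 : ETree2 A
  | node : ETree2 A → A → ETree2 A → ETree2 A

namespace ETree2

/-- `X.substBoxes Y Z = X[□₁↦Y, □₂↦Z]`. -/
def substBoxes {A : Type} : ETree2 A → ETree A → ETree A → ETree A
  | .tru, _, _ => ETree.tru
  | .fls, _, _ => ETree.fls
  | .box1, y, _ => y
  | .box2, _, z => z
  | .node l a r, y, z => ETree.node (substBoxes l y z) a (substBoxes r y z)

def hasBox1 {A : Type} : ETree2 A → Prop
  | .tru => False
  | .fls => False
  | .box1 => True
  | .box2 => False
  | .node l _ r => hasBox1 l ∨ hasBox1 r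

def hasBox2 {A : Type} : ETree2 A → Prop
  | .tru => False
  | .fls => False
  | .box1 => False
  | .box2 => True
  | .node l _ r => hasBox2 l ∨ hasBox2 r

def hasTru {A : Type} : ETree2 A → Prop
  | .tru => True
  | .fls => False
  | .box1 => False
  | .box2 => False
  | .node l _ r => hasTru l ∨ hasTru r

def hasFls {A : Type} : ETree2 A → Prop
  | .tru => False
  | .fls => True
  | .box1 => False
  | .box2 => False
  | .node l _ r => hasFls l ∨ hasFls r

end ETree2

namespace ETree

/-- `X[T↦□₁, F↦□₂]`. -/
def toBoxes {A : Type} : ETree A → ETree2 A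
  | .tru => ETree2.box1
  | .fls => ETree2.box2
  | .node l a r => ETree2.node (toBoxes l) a (toBoxes r)

/-- `X[T↦□]`. -/
def truToBox {A : Type} : ETree A → ETreeB A
  | .tru => ETreeB.box
  | .fls => ETreeB.fls
  | .node l a r => ETreeB.node (truToBox l) a (truToBox r)

/-- `X[F↦□]`. -/
def flsToBox {A : Type} : ETree A → ETreeB A
  | .tru => ETreeB.tru
  | .fls => ETreeB.box
  | .node l a r => ETreeB.node (flsToBox l) a (flsToBox r)

end ETree

/-! ### FEL decompositions -/

/-- Candidate conjunction decomposition (FEL):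
    `X = Y[□₁↦Z, □₂↦Z[T↦F]]`, `Y` contains both boxes, neither `T` nor `F`,
    and `Z` contains both `T` and `F`. -/
def IsCcdF {A : Type} (X : ETree A) (Y : ETree2 A) (Z : ETree A) : Prop :=
  X = Y.substBoxes Z (Z.subst ETree.fls ETree.fls) ∧
  Y.hasBox1 ∧ Y.hasBox2 ∧ ¬ Y.hasTru ∧ ¬ Y.hasFls ∧ Z.hasTru ∧ Z.hasFls

/-- Candidate disjunction decomposition (FEL):
    `X = Y[□₁↦Z[F↦T], □₂↦Z]` with the same side conditions. -/
def IsCddF {A : Type} (X : ETree A) (Y : ETree2 A) (Z : ETree A) : Prop :=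
  X = Y.substBoxes (Z.subst ETree.tru ETree.tru) Z ∧
  Y.hasBox1 ∧ Y.hasBox2 ∧ ¬ Y.hasTru ∧ ¬ Y.hasFls ∧ Z.hasTru ∧ Z.hasFls

/-- Conjunction decomposition (FEL): a ccd with `Z` of minimal depth. -/
def IsCdF {A : Type} (X : ETree A) (Y : ETree2 A) (Z : ETree A) : Prop :=
  IsCcdF X Y Z ∧ ∀ (Y' : ETree2 A) (Z' : ETree A), IsCcdF X Y' Z' → Z.depth ≤ Z'.depth

/-- Disjunction decomposition (FEL): a cdd with `Z` of minimal depth. -/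
def IsDdF {A : Type} (X : ETree A) (Y : ETree2 A) (Z : ETree A) : Prop :=
  IsCddF X Y Z ∧ ∀ (Y' : ETree2 A) (Z' : ETree A), IsCddF X Y' Z' → Z.depth ≤ Z'.depth

/-- T-*-decomposition (FEL): `X = Y[□↦Z]`, `Y` contains neither `T` nor `F`,
    and `Z` admits no nontrivial box decomposition. -/
def IsTsdF {A : Type} (X : ETree A) (Y : ETreeB A) (Z : ETree A) : Prop :=
  X = Y.substBox Z ∧ ¬ Y.hasTru ∧ ¬ Y.hasFls ∧
  ¬ ∃ (U : ETreeB A) (V : ETree A),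
      Z = U.substBox V ∧ U.hasBox ∧ U ≠ ETreeB.box ∧ ¬ U.hasTru ∧ ¬ U.hasFls

/-! ### SCL decompositions -/

/-- Candidate conjunction decomposition (SCL): `X = Y[□↦Z]`, `Y` contains `□`,
    `Y` contains `F` but not `T`, and `Z` contains both `T` and `F`. -/
def IsCcdS {A : Type} (X : ETree A) (Y : ETreeB A) (Z : ETree A) : Prop :=
  X = Y.substBox Z ∧ Y.hasBox ∧ Y.hasFls ∧ ¬ Y.hasTru ∧ Z.hasTru ∧ Z.hasFls

/-- Candidate disjunction decomposition (SCL): `X = Y[□↦Z]`, `Y` contains `□`,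
    `Y` contains `T` but not `F`, and `Z` contains both `T` and `F`. -/
def IsCddS {A : Type} (X : ETree A) (Y : ETreeB A) (Z : ETree A) : Prop :=
  X = Y.substBox Z ∧ Y.hasBox ∧ Y.hasTru ∧ ¬ Y.hasFls ∧ Z.hasTru ∧ Z.hasFls

/-- Conjunction decomposition (SCL): a ccd with `Z` of minimal depth. -/
def IsCdS {A : Type} (X : ETree A) (Y : ETreeB A) (Z : ETree A) : Prop :=
  IsCcdS X Y Z ∧ ∀ (Y' : ETreeB A) (Z' : ETree A), IsCcdS X Y' Z' → Z.depth ≤ Z'.depth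

/-- Disjunction decomposition (SCL): a cdd with `Z` of minimal depth. -/
def IsDdS {A : Type} (X : ETree A) (Y : ETreeB A) (Z : ETree A) : Prop :=
  IsCddS X Y Z ∧ ∀ (Y' : ETreeB A) (Z' : ETree A), IsCddS X Y' Z' → Z.depth ≤ Z'.depth

/-- Candidate T-*-decomposition (SCL). -/
def IsCtsdS {A : Type} (X : ETree A) (Y : ETreeB A) (Z : ETree A) : Prop :=
  X = Y.substBox Z ∧ ¬ Y.hasTru ∧ ¬ Y.hasFls ∧
  ¬ ∃ (U : ETreeB A) (V : ETree A),
      Z = U.substBox V ∧ U.hasBox ∧ U ≠ ETreeB.box ∧ ¬ U.hasTru ∧ ¬ U.hasFls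

/-- T-*-decomposition (SCL): a ctsd with `Z` of minimal depth. -/
def IsTsdS {A : Type} (X : ETree A) (Y : ETreeB A) (Z : ETree A) : Prop :=
  IsCtsdS X Y Z ∧ ∀ (Y' : ETreeB A) (Z' : ETree A), IsCtsdS X Y' Z' → Z.depth ≤ Z'.depth

/-- The translation `h : FTerm → STerm` from FEL-terms to SCL-terms. -/
def hTrans {A : Type} : FTerm A → STerm A
  | FTerm.tru => STerm.tru
  | FTerm.fls => STerm.fls
  | FTerm.atom a => STerm.atom a
  | FTerm.neg p => STerm.neg (hTrans p)
  | FTerm.and p q => STerm.and (STerm.or (hTrans p) (STerm.and (hTrans q) STerm.fls)) (hTrans q)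
  | FTerm.or p q => STerm.or (STerm.and (hTrans p) (STerm.or (hTrans q) STerm.tru)) (hTrans q)

/-! ### Auxiliary development for non-decomposition -/

namespace FelND
open ETree

variable {A : Type}

/-- Grafts of `Y`: exactly the trees of the form `X[□↦Y]` with `X` all-box. -/
inductive Graft (Y : ETree A) : ETree A → Prop
  | base : Graft Y Y
  | node {l r : ETree A} (a : A) : Graft Y l → Graft Y r → Graft Y (ETree.node l a r)

inductive Subt (Y : ETree A) : ETree A → Prop
  | refl : Subt Y Y
  | left {l r : ETree A} (a : A) : Subt Y l → Subt Y (ETree.node l a r)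
  | right {l r : ETree A} (a : A) : Subt Y r → Subt Y (ETree.node l a r)

lemma hasTru_or_hasFls : ∀ X : ETree A, X.hasTru ∨ X.hasFls := by
  intro X
  induction X with
  | tru => left; trivial
  | fls => right; trivial
  | node l a r ihl ihr =>
      rcases ihl with h | h
      · left; exact Or.inl h
      · right; exact Or.inl h

lemma graft_depth {Y W : ETree A} (h : Graft Y W) : Y.depth ≤ W.depth := by
  induction h with
  | base => exact le_rfl
  | node a hl hr ihl ihr => simp only [ETree.depth]; omega

lemma graft_subt {Y W : ETree A} (h : Graft Y W) : Subt Y W := by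
  induction h with
  | base => exact Subt.refl
  | node a hl hr ihl ihr => exact Subt.left a ihl

lemma subt_depth {Y W : ETree A} (h : Subt Y W) : Y.depth ≤ W.depth := by
  induction h with
  | refl => exact le_rfl
  | left a h ih => simp only [ETree.depth]; omega
  | right a h ih => simp only [ETree.depth]; omega

lemma subt_notTru {Y W : ETree A} (h : Subt Y W) (hW : ¬ W.hasTru) : ¬ Y.hasTru := by
  induction h with
  | refl => exact hW
  | left a h ih => exact ih (fun hy => hW (Or.inl hy))
  | right a h ih => exact ih (fun hy => hW (Or.inr hy))

lemma subt_notFls {Y W : ETree A} (h : Subt Y W) (hW : ¬ W.hasFls) : ¬ Y.hasFls := by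
  induction h with
  | refl => exact hW
  | left a h ih => exact ih (fun hy => hW (Or.inl hy))
  | right a h ih => exact ih (fun hy => hW (Or.inr hy))

lemma graft_notTru {Y W : ETree A} (h : Graft Y W) (hW : ¬ W.hasTru) : ¬ Y.hasTru := by
  induction h with
  | base => exact hW
  | node a hl hr ihl ihr => exact ihl (fun hy => hW (Or.inl hy))

lemma graft_notFls {Y W : ETree A} (h : Graft Y W) (hW : ¬ W.hasFls) : ¬ Y.hasFls := by
  induction h with
  | base => exact hW
  | node a hl hr ihl ihr => exact ihl (fun hy => hW (Or.inl hy))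

lemma graft_notTru' {Y W : ETree A} (h : Graft Y W) (hY : ¬ Y.hasTru) : ¬ W.hasTru := by
  induction h with
  | base => exact hY
  | node a hl hr ihl ihr => rintro (h | h); exacts [ihl h, ihr h]

lemma graft_notFls' {Y W : ETree A} (h : Graft Y W) (hY : ¬ Y.hasFls) : ¬ W.hasFls := by
  induction h with
  | base => exact hY
  | node a hl hr ihl ihr => rintro (h | h); exacts [ihl h, ihr h]

/-! subst lemmas -/

lemma subst_fls_fls_notTru : ∀ Z : ETree A, ¬ (Z.subst ETree.fls ETree.fls).hasTru := by
  intro Z; induction Z with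
  | tru => simp [ETree.subst, ETree.hasTru]
  | fls => simp [ETree.subst, ETree.hasTru]
  | node l a r ihl ihr => simp only [ETree.subst, ETree.hasTru]; rintro (h | h); exacts [ihl h, ihr h]

lemma subst_fls_fls_hasFls : ∀ Z : ETree A, (Z.subst ETree.fls ETree.fls).hasFls := by
  intro Z; induction Z with
  | tru => trivial
  | fls => trivial
  | node l a r ihl ihr => exact Or.inl ihl

lemma subst_tru_tru_notFls : ∀ Z : ETree A, ¬ (Z.subst ETree.tru ETree.tru).hasFls := by
  intro Z; induction Z with
  | tru => simp [ETree.subst, ETree.hasFls]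
  | fls => simp [ETree.subst, ETree.hasFls]
  | node l a r ihl ihr => simp only [ETree.subst, ETree.hasFls]; rintro (h | h); exacts [ihl h, ihr h]

lemma subst_tru_tru_hasTru : ∀ Z : ETree A, (Z.subst ETree.tru ETree.tru).hasTru := by
  intro Z; induction Z with
  | tru => trivial
  | fls => trivial
  | node l a r ihl ihr => exact Or.inl ihl

lemma subst_fls_fls_depth : ∀ Z : ETree A, (Z.subst ETree.fls ETree.fls).depth = Z.depth := by
  intro Z; induction Z with
  | tru => rfl
  | fls => rfl
  | node l a r ihl ihr => simp only [ETree.subst, ETree.depth, ihl, ihr]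

lemma subst_tru_tru_depth : ∀ Z : ETree A, (Z.subst ETree.tru ETree.tru).depth = Z.depth := by
  intro Z; induction Z with
  | tru => rfl
  | fls => rfl
  | node l a r ihl ihr => simp only [ETree.subst, ETree.depth, ihl, ihr]

lemma subst_hasTru {Z1 Z2 : ETree A} : ∀ S : ETree A,
    (S.hasTru ∧ Z1.hasTru) ∨ (S.hasFls ∧ Z2.hasTru) → (S.subst Z1 Z2).hasTru := by
  intro S; induction S with
  | tru => rintro (⟨_, h⟩ | ⟨h, _⟩); exacts [h, h.elim]
  | fls => rintro (⟨h, _⟩ | ⟨_, h⟩); exacts [h.elim, h]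
  | node l a r ihl ihr =>
      rintro (⟨(h | h), hz⟩ | ⟨(h | h), hz⟩)
      · exact Or.inl (ihl (Or.inl ⟨h, hz⟩))
      · exact Or.inr (ihr (Or.inl ⟨h, hz⟩))
      · exact Or.inl (ihl (Or.inr ⟨h, hz⟩))
      · exact Or.inr (ihr (Or.inr ⟨h, hz⟩))

lemma subst_hasFls {Z1 Z2 : ETree A} : ∀ S : ETree A,
    (S.hasTru ∧ Z1.hasFls) ∨ (S.hasFls ∧ Z2.hasFls) → (S.subst Z1 Z2).hasFls := by
  intro S; induction S with
  | tru => rintro (⟨_, h⟩ | ⟨h, _⟩); exacts [h, h.elim]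
  | fls => rintro (⟨h, _⟩ | ⟨_, h⟩); exacts [h.elim, h]
  | node l a r ihl ihr =>
      rintro (⟨(h | h), hz⟩ | ⟨(h | h), hz⟩)
      · exact Or.inl (ihl (Or.inl ⟨h, hz⟩))
      · exact Or.inr (ihr (Or.inl ⟨h, hz⟩))
      · exact Or.inl (ihl (Or.inr ⟨h, hz⟩))
      · exact Or.inr (ihr (Or.inr ⟨h, hz⟩))

lemma subst_depth_ge {Z1 Z2 : ETree A} (hd : Z1.depth = Z2.depth) :
    ∀ S : ETree A, Z1.depth ≤ (S.subst Z1 Z2).depth := by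
  intro S; induction S with
  | tru => exact le_rfl
  | fls => exact le_of_eq hd
  | node l a r ihl ihr => simp only [ETree.subst, ETree.depth]; omega

lemma subst_injective {Z1 Z2 : ETree A} (hne : Z1 ≠ Z2) (hd : Z1.depth = Z2.depth) :
    ∀ S S' : ETree A, S.subst Z1 Z2 = S'.subst Z1 Z2 → S = S' := by
  intro S
  induction S with
  | tru =>
      intro S' h
      cases S' with
      | tru => rfl
      | fls => exact absurd h hne
      | node l' a' r' =>
          exfalso
          have h1 : Z1.depth ≤ ((l'.subst Z1 Z2).depth) := subst_depth_ge hd l'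
          have h2 : Z1.depth = (ETree.node (l'.subst Z1 Z2) a' (r'.subst Z1 Z2)).depth := by
            have e : ETree.tru.subst Z1 Z2 = ETree.node (l'.subst Z1 Z2) a' (r'.subst Z1 Z2) := h
            exact congrArg ETree.depth e
          simp only [ETree.depth] at h2; omega
  | fls =>
      intro S' h
      cases S' with
      | tru => exact absurd h.symm hne
      | fls => rfl
      | node l' a' r' =>
          exfalso
          have h1 : Z1.depth ≤ ((l'.subst Z1 Z2).depth) := subst_depth_ge hd l'
          have h2 : Z2.depth = (ETree.node (l'.subst Z1 Z2) a' (r'.subst Z1 Z2)).depth := by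
            have e : ETree.fls.subst Z1 Z2 = ETree.node (l'.subst Z1 Z2) a' (r'.subst Z1 Z2) := h
            exact congrArg ETree.depth e
          simp only [ETree.depth] at h2; omega
  | node l a r ihl ihr =>
      intro S' h
      cases S' with
      | tru =>
          exfalso
          have h1 : Z1.depth ≤ ((l.subst Z1 Z2).depth) := subst_depth_ge hd l
          have h2 : Z1.depth = (ETree.node (l.subst Z1 Z2) a (r.subst Z1 Z2)).depth := by
            have e : ETree.node (l.subst Z1 Z2) a (r.subst Z1 Z2) = ETree.tru.subst Z1 Z2 := h
            exact (congrArg ETree.depth e).symm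
          simp only [ETree.depth] at h2; omega
      | fls =>
          exfalso
          have h1 : Z1.depth ≤ ((l.subst Z1 Z2).depth) := subst_depth_ge hd l
          have h2 : Z2.depth = (ETree.node (l.subst Z1 Z2) a (r.subst Z1 Z2)).depth := by
            have e : ETree.node (l.subst Z1 Z2) a (r.subst Z1 Z2) = ETree.fls.subst Z1 Z2 := h
            exact (congrArg ETree.depth e).symm
          simp only [ETree.depth] at h2; omega
      | node l' a' r' =>
          simp only [ETree.subst, ETree.node.injEq] at h
          obtain ⟨h1, h2, h3⟩ := h
          rw [ihl l' h1, h2, ihr r' h3]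

/-- Lifting: a graft of `Y = S''[Z1,Z2]` inside `S'[Z1,Z2]` lifts to a graft of `S''` in `S'`. -/
lemma graft_lift {Y : ETree A} {Z1 Z2 : ETree A} (hne : Z1 ≠ Z2) (hd : Z1.depth = Z2.depth)
    {S'' : ETree A} (hY : Y = S''.subst Z1 Z2) :
    ∀ {W : ETree A}, Graft Y W → ∀ S' : ETree A, W = S'.subst Z1 Z2 → Graft S'' S' := by
  intro W hG
  induction hG with
  | base =>
      intro S' hW
      have : S'' = S' := subst_injective hne hd _ _ (by rw [← hY, ← hW])
      rw [← this]; exact Graft.base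
  | node a hl hr ihl ihr =>
      rename_i l r
      intro S' hW
      cases S' with
      | tru =>
          exfalso
          have hZ1 : Z1 = ETree.node l a r := hW.symm
          have hdl : Y.depth ≤ l.depth := graft_depth hl
          have hge : Z1.depth ≤ Y.depth := by rw [hY]; exact subst_depth_ge hd S''
          have : Z1.depth = 1 + max l.depth r.depth := by rw [hZ1]; rfl
          omega
      | fls =>
          exfalso
          have hZ2 : Z2 = ETree.node l a r := hW.symm
          have hdl : Y.depth ≤ l.depth := graft_depth hl
          have hge : Z1.depth ≤ Y.depth := by rw [hY]; exact subst_depth_ge hd S''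
          have : Z2.depth = 1 + max l.depth r.depth := by rw [hZ2]; rfl
          omega
      | node sl sa sr =>
          have hW' : ETree.node l a r = ETree.node (sl.subst Z1 Z2) sa (sr.subst Z1 Z2) := hW
          injection hW' with e1 e2 e3
          subst e2
          exact Graft.node a (ihl sl e1) (ihr sr e3)

/-- Dichotomy: a graft piece inside `S'[Z1,Z2]` is itself of the form `S''[Z1,Z2]`,
    or a subtree of `Z1` or of `Z2`. -/
lemma graft_dichotomy {Y : ETree A} {Z1 Z2 : ETree A} :
    ∀ {W : ETree A}, Graft Y W → ∀ S' : ETree A, W = S'.subst Z1 Z2 →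
      (∃ S'' : ETree A, Y = S''.subst Z1 Z2) ∨ Subt Y Z1 ∨ Subt Y Z2 := by
  intro W hG
  induction hG with
  | base => intro S' hW; exact Or.inl ⟨S', hW⟩
  | node a hl hr ihl ihr =>
      rename_i l r
      intro S' hW
      cases S' with
      | tru =>
          right; left
          have hZ1 : Z1 = ETree.node l a r := hW.symm
          rw [hZ1]; exact Subt.left a (graft_subt hl)
      | fls =>
          right; right
          have hZ2 : Z2 = ETree.node l a r := hW.symm
          rw [hZ2]; exact Subt.left a (graft_subt hl)
      | node sl sa sr =>
          have hW' : ETree.node l a r = ETree.node (sl.subst Z1 Z2) sa (sr.subst Z1 Z2) := hW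
          injection hW' with e1 _ e3
          exact ihl sl e1

/-- Contradiction lemma (conjunction flavour): `Z2` all-F, `Y` has a T leaf,
    `Y` no deeper than the `Z`'s, and `S'` has an F leaf. -/
lemma graft_small_falseT {Y Z1 Z2 : ETree A} (hZ2 : ¬ Z2.hasTru) (hYT : Y.hasTru)
    (hYd : Y.depth ≤ Z1.depth) (hd : Z1.depth = Z2.depth) :
    ∀ {W : ETree A}, Graft Y W → ∀ S' : ETree A, W = S'.subst Z1 Z2 → S'.hasFls → False := by
  intro W hG
  induction hG with
  | base =>
      intro S' hW hF
      cases S' with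
      | tru => exact hF
      | fls =>
          have e : Y = Z2 := hW
          exact hZ2 (e ▸ hYT)
      | node sl sa sr =>
          have h1 : Z1.depth ≤ (sl.subst Z1 Z2).depth := subst_depth_ge hd sl
          have h2 : Y.depth = 1 + max (sl.subst Z1 Z2).depth (sr.subst Z1 Z2).depth := by
            rw [hW]; rfl
          omega
  | node a hl hr ihl ihr =>
      rename_i l r
      intro S' hW hF
      cases S' with
      | tru => exact hF
      | fls =>
          have hZ2' : Z2 = ETree.node l a r := hW.symm
          have : ¬ l.hasTru := fun h => hZ2 (by rw [hZ2']; exact Or.inl h)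
          exact graft_notTru hl this hYT
      | node sl sa sr =>
          have hW' : ETree.node l a r = ETree.node (sl.subst Z1 Z2) sa (sr.subst Z1 Z2) := hW
          injection hW' with e1 _ e3
          rcases hF with hF | hF
          · exact ihl sl e1 hF
          · exact ihr sr e3 hF

/-- Contradiction lemma (disjunction flavour): `Z1` all-T, `Y` has an F leaf,
    `Y` no deeper than the `Z`'s, and `S'` has a T leaf. -/
lemma graft_small_falseF {Y Z1 Z2 : ETree A} (hZ1 : ¬ Z1.hasFls) (hYF : Y.hasFls)
    (hYd : Y.depth ≤ Z1.depth) (hd : Z1.depth = Z2.depth) :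
    ∀ {W : ETree A}, Graft Y W → ∀ S' : ETree A, W = S'.subst Z1 Z2 → S'.hasTru → False := by
  intro W hG
  induction hG with
  | base =>
      intro S' hW hT
      cases S' with
      | tru =>
          have e : Y = Z1 := hW
          exact hZ1 (e ▸ hYF)
      | fls => exact hT
      | node sl sa sr =>
          have h1 : Z1.depth ≤ (sl.subst Z1 Z2).depth := subst_depth_ge hd sl
          have h2 : Y.depth = 1 + max (sl.subst Z1 Z2).depth (sr.subst Z1 Z2).depth := by
            rw [hW]; rfl
          omega
  | node a hl hr ihl ihr =>
      rename_i l r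
      intro S' hW hT
      cases S' with
      | tru =>
          have hZ1' : Z1 = ETree.node l a r := hW.symm
          have : ¬ l.hasFls := fun h => hZ1 (by rw [hZ1']; exact Or.inl h)
          exact graft_notFls hl this hYF
      | fls => exact hT
      | node sl sa sr =>
          have hW' : ETree.node l a r = ETree.node (sl.subst Z1 Z2) sa (sr.subst Z1 Z2) := hW
          injection hW' with e1 _ e3
          rcases hT with hT | hT
          · exact ihl sl e1 hT
          · exact ihr sr e3 hT

/-- T-terms evaluate to all-T trees. -/
lemma ftT_notFls {t : FTerm A} (h : IsFT_T t) : ¬ (fe t).hasFls := by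
  induction h with
  | tru => simp [fe, ETree.hasFls]
  | or a h ih =>
      show ¬ (ETree.node ((fe _).subst ETree.tru ETree.tru) a (fe _)).hasFls
      rintro (hh | hh)
      · exact subst_tru_tru_notFls _ hh
      · exact ih hh

end FelND

namespace FelND

variable {A : Type}

lemma ell_prime {U V : ETree A} (hU : ¬ U.hasFls) (hV : ¬ V.hasTru) (a : A) :
    ∀ Y, Graft Y (ETree.node U a V) → Y = ETree.node U a V := by
  intro Y h
  cases h with
  | base => rfl
  | node _ hl hr =>
      exfalso
      have h1 : ¬ Y.hasFls := graft_notFls hl hU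
      have h2 : ¬ Y.hasTru := graft_notTru hr hV
      rcases hasTru_or_hasFls Y with h | h
      exacts [h2 h, h1 h]

lemma ell_prime' {U V : ETree A} (hU : ¬ U.hasFls) (hV : ¬ V.hasTru) (a : A) :
    ∀ Y, Graft Y (ETree.node V a U) → Y = ETree.node V a U := by
  intro Y h
  cases h with
  | base => rfl
  | node _ hl hr =>
      exfalso
      have h1 : ¬ Y.hasTru := graft_notTru hl hV
      have h2 : ¬ Y.hasFls := graft_notFls hr hU
      rcases hasTru_or_hasFls Y with h | h
      exacts [h1 h, h2 h]

lemma and_main {S Z : ETree A}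
    (hST : S.hasTru) (hSF : S.hasFls) (hSp : ∀ Y, Graft Y S → Y = S)
    (hZT : Z.hasTru) :
    ∀ Y, Graft Y (S.subst Z (Z.subst ETree.fls ETree.fls)) →
      Y = S.subst Z (Z.subst ETree.fls ETree.fls) := by
  set Z2 := Z.subst ETree.fls ETree.fls with hZ2def
  have hne : Z ≠ Z2 := by
    intro h
    have h2 := subst_fls_fls_notTru Z
    rw [← hZ2def] at h2
    rw [← h] at h2
    exact h2 hZT
  have hd : Z.depth = Z2.depth := (subst_fls_fls_depth Z).symm
  intro Y hG
  rcases graft_dichotomy hG S rfl with ⟨S'', hY⟩ | hsub | hsub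
  · have hGS : Graft S'' S := graft_lift hne hd hY hG S rfl
    rw [hY, hSp _ hGS]
  · by_cases hYT : Y.hasTru
    · exact absurd (graft_small_falseT (subst_fls_fls_notTru Z) hYT (subt_depth hsub) hd
        hG S rfl hSF) not_false
    · exact absurd (subst_hasTru S (Or.inl ⟨hST, hZT⟩)) (graft_notTru' hG hYT)
  · have hYT : ¬ Y.hasTru := subt_notTru hsub (subst_fls_fls_notTru Z)
    exact absurd (subst_hasTru S (Or.inl ⟨hST, hZT⟩)) (graft_notTru' hG hYT)

lemma or_main {S Z : ETree A}
    (hST : S.hasTru) (hSF : S.hasFls) (hSp : ∀ Y, Graft Y S → Y = S)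
    (hZF : Z.hasFls) :
    ∀ Y, Graft Y (S.subst (Z.subst ETree.tru ETree.tru) Z) →
      Y = S.subst (Z.subst ETree.tru ETree.tru) Z := by
  set Z1 := Z.subst ETree.tru ETree.tru with hZ1def
  have hne : Z1 ≠ Z := by
    intro h
    have h2 := subst_tru_tru_notFls Z
    rw [← hZ1def] at h2
    rw [h] at h2
    exact h2 hZF
  have hd : Z1.depth = Z.depth := subst_tru_tru_depth Z
  intro Y hG
  rcases graft_dichotomy hG S rfl with ⟨S'', hY⟩ | hsub | hsub
  · have hGS : Graft S'' S := graft_lift hne hd hY hG S rfl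
    rw [hY, hSp _ hGS]
  · have hYF : ¬ Y.hasFls := subt_notFls hsub (subst_tru_tru_notFls Z)
    exact absurd (subst_hasFls S (Or.inr ⟨hSF, hZF⟩)) (graft_notFls' hG hYF)
  · by_cases hYF : Y.hasFls
    · exact absurd (graft_small_falseF (subst_tru_tru_notFls Z) hYF
        (le_trans (subt_depth hsub) (le_of_eq hd.symm)) hd hG S rfl hST) not_false
    · exact absurd (subst_hasFls S (Or.inr ⟨hSF, hZF⟩)) (graft_notFls' hG hYF)

/-- Main lemma: for a *-term `P`, `fe P` has both leaf kinds and is graft-prime. -/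
theorem star_main : ∀ P : FTerm A, IsFT_Star P →
    (fe P).hasTru ∧ (fe P).hasFls ∧ ∀ Y, Graft Y (fe P) → Y = fe P := by
  intro P
  induction P with
  | atom a =>
      intro h
      cases h with
      | c hc => cases hc with | ell hl => cases hl
      | d hd => cases hd with | ell hl => cases hl
  | tru =>
      intro h
      cases h with
      | c hc => cases hc with | ell hl => cases hl
      | d hd => cases hd with | ell hl => cases hl
  | fls =>
      intro h
      cases h with
      | c hc => cases hc with | ell hl => cases hl
      | d hd => cases hd with | ell hl => cases hl
  | neg p ih =>
      intro h
      cases h with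
      | c hc => cases hc with | ell hl => cases hl
      | d hd => cases hd with | ell hl => cases hl
  | and p q ihp ihq =>
      intro h
      have hL : ∀ (hl : IsFT_L (FTerm.and p q)),
          (fe (FTerm.and p q)).hasTru ∧ (fe (FTerm.and p q)).hasFls ∧
            ∀ Y, Graft Y (fe (FTerm.and p q)) → Y = fe (FTerm.and p q) := by
        intro hl
        cases hl with
        | pos a ht =>
            have hU : ¬ (fe q).hasFls := ftT_notFls ht
            have hUT : (fe q).hasTru := (hasTru_or_hasFls (fe q)).resolve_right hU
            show (ETree.node (fe q) a ((fe q).subst ETree.fls ETree.fls)).hasTru ∧ _ ∧ _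
            exact ⟨Or.inl hUT, Or.inr (subst_fls_fls_hasFls (fe q)),
              ell_prime hU (subst_fls_fls_notTru (fe q)) a⟩
        | neg a ht =>
            have hU : ¬ (fe q).hasFls := ftT_notFls ht
            have hUT : (fe q).hasTru := (hasTru_or_hasFls (fe q)).resolve_right hU
            show (ETree.node ((fe q).subst ETree.fls ETree.fls) a (fe q)).hasTru ∧ _ ∧ _
            exact ⟨Or.inr hUT, Or.inl (subst_fls_fls_hasFls (fe q)),
              ell_prime' hU (subst_fls_fls_notTru (fe q)) a⟩
      have hCand : IsFT_Star p → IsFT_Star q →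
          (fe (FTerm.and p q)).hasTru ∧ (fe (FTerm.and p q)).hasFls ∧
            ∀ Y, Graft Y (fe (FTerm.and p q)) → Y = fe (FTerm.and p q) := by
        intro hp hq
        obtain ⟨hST, hSF, hSp⟩ := ihp hp
        obtain ⟨hZT, hZF, _⟩ := ihq hq
        show ((fe p).subst (fe q) ((fe q).subst ETree.fls ETree.fls)).hasTru ∧ _ ∧ _
        exact ⟨subst_hasTru _ (Or.inl ⟨hST, hZT⟩),
          subst_hasFls _ (Or.inr ⟨hSF, subst_fls_fls_hasFls _⟩),
          and_main hST hSF hSp hZT⟩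
      cases h with
      | c hc =>
          cases hc with
          | ell hl => exact hL hl
          | and hp hq => exact hCand hp (IsFT_Star.d hq)
      | d hd =>
          cases hd with
          | ell hl => exact hL hl
  | or p q ihp ihq =>
      intro h
      have hmain : IsFT_Star p → IsFT_Star q →
          (fe (FTerm.or p q)).hasTru ∧ (fe (FTerm.or p q)).hasFls ∧
            ∀ Y, Graft Y (fe (FTerm.or p q)) → Y = fe (FTerm.or p q) := by
        intro hp hq
        obtain ⟨hST, hSF, hSp⟩ := ihp hp
        obtain ⟨hZT, hZF, _⟩ := ihq hq
        show ((fe p).subst ((fe q).subst ETree.tru ETree.tru) (fe q)).hasTru ∧ _ ∧ _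
        exact ⟨subst_hasTru _ (Or.inl ⟨hST, subst_tru_tru_hasTru _⟩),
          subst_hasFls _ (Or.inr ⟨hSF, hZF⟩),
          or_main hST hSF hSp hZF⟩
      cases h with
      | c hc => cases hc with | ell hl => cases hl
      | d hd =>
          cases hd with
          | ell hl => cases hl
          | or hp hq => exact hmain hp (IsFT_Star.c hq)

lemma boxfree_graft (Y : ETree A) :
    ∀ X : ETreeB A, ¬ X.hasTru → ¬ X.hasFls → Graft Y (X.substBox Y) := by
  intro X
  induction X with
  | tru => intro hT _; exact absurd trivial hT
  | fls => intro _ hF; exact absurd trivial hF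
  | box => intro _ _; exact Graft.base
  | node l a r ihl ihr =>
      intro hT hF
      exact Graft.node a (ihl (fun h => hT (Or.inl h)) (fun h => hF (Or.inl h)))
        (ihr (fun h => hT (Or.inr h)) (fun h => hF (Or.inr h)))

lemma boxfree_depth (Y : ETree A) :
    ∀ X : ETreeB A, ¬ X.hasTru → ¬ X.hasFls → Y.depth ≤ (X.substBox Y).depth := by
  intro X
  induction X with
  | tru => intro hT _; exact absurd trivial hT
  | fls => intro _ hF; exact absurd trivial hF
  | box => intro _ _; exact le_rfl
  | node l a r ihl ihr =>
      intro hT hF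
      have := ihl (fun h => hT (Or.inl h)) (fun h => hF (Or.inl h))
      show Y.depth ≤ 1 + max (l.substBox Y).depth (r.substBox Y).depth
      omega

end FelND

/-- non-decomposition (FEL). -/
theorem fel_non_decomposition (A : Type) [Countable A] :
    ¬ ∃ (P : FTerm A) (X : ETreeB A) (Y : ETree A),
        IsFT_Star P ∧ fe P = X.substBox Y ∧ X ≠ ETreeB.box ∧ X.hasBox ∧
        ¬ X.hasTru ∧ ¬ X.hasFls := by
  rintro ⟨P, X, Y, hstar, heq, hne, -, hT, hF⟩
  have hG : FelND.Graft Y (fe P) := by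
    rw [heq]; exact FelND.boxfree_graft Y X hT hF
  have hmain : Y = fe P := (FelND.star_main P hstar).2.2 Y hG
  cases X with
  | box => exact hne rfl
  | tru => exact hT trivial
  | fls => exact hF trivial
  | node l a r =>
      have hd1 : Y.depth ≤ (l.substBox Y).depth :=
        FelND.boxfree_depth Y l (fun h => hT (Or.inl h)) (fun h => hF (Or.inl h))
      have hd2 : (fe P).depth = 1 + max (l.substBox Y).depth (r.substBox Y).depth := by
        rw [heq]; rfl
      rw [← hmain] at hd2
      omega
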